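/- Let X ⊆ ℝ^d be a nonempty closed convex set, let f_1,…,f_m:ℝ^d→ℝ be convex differentiable functions with ‖∇f_i(x)‖ ≤ G_f for all x ∈ X and all i, and set f = Σ_{i=1}^m f_i. Let v_1,…,v_m ∈ ℝ^d, z_i = Π_X[v_i], z̄ = (1/m)Σ_{ℓ=1}^m z_ℓ and v̄ = (1/m)Σ_{ℓ=1}^m v_ℓ. Then for every x̌ ∈ X: Σ_{i=1}^m (f_i(z_i) − f_i(x̌)) ≥ −2G_f·Σ_{i=1}^m ‖v_i − v̄‖ + (f(z̄) − f(x̌)). -/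

import Mathlib

/-!
Convexity at `z̄ ∈ X` lets each `f i` drop from `f i z̄` to `f i (z i)` by at most
`G_f ‖z i - z̄‖`. Projection onto a convex set is nonexpansive, so
`∑ ‖z i - z̄‖ ≤ (1/m) ∑_{i,ℓ} ‖v i - v ℓ‖ ≤ 2 ∑ ‖v i - v̄‖`, the last step by the triangle
inequality through `v̄`.
-/

open RealInnerProductSpace

section Gradient

variable {E : Type*} [NormedAddCommGroup E] [InnerProductSpace ℝ E] [CompleteSpace E]
  {f : E → ℝ} {g y : E}

theorem ConvexOn.add_inner_le_of_hasGradientAt (hf : ConvexOn ℝ Set.univ f)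
    (hg : HasGradientAt f g y) (x : E) : f y + ⟪g, x - y⟫ ≤ f x := by
  let γ : ℝ →ᵃ[ℝ] E := AffineMap.lineMap y x
  have hφ : ConvexOn ℝ Set.univ (f ∘ γ) := hf.comp_affineMap γ
  have hφ' : HasDerivAt (f ∘ γ) ⟪g, x - y⟫ 0 := by
    have hg' : HasFDerivAt f (InnerProductSpace.toDual ℝ E g) (γ 0) := by
      simpa [γ] using hg.hasFDerivAt
    exact hg'.comp_hasDerivAt 0 AffineMap.hasDerivAt_lineMap
  have := hφ.le_slope_of_hasDerivAt (Set.mem_univ 0) (Set.mem_univ 1) one_pos hφ'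
  simp only [slope_def_field, Function.comp_apply, AffineMap.lineMap_apply_one,
    AffineMap.lineMap_apply_zero, sub_zero, div_one, γ] at this
  linarith

theorem ConvexOn.neg_mul_norm_sub_le_sub_of_hasGradientAt (hf : ConvexOn ℝ Set.univ f)
    (hg : HasGradientAt f g y) {G : ℝ} (hG : ‖g‖ ≤ G) (x : E) :
    -(G * ‖x - y‖) ≤ f x - f y := by
  have h := hf.add_inner_le_of_hasGradientAt hg x
  have := neg_le_of_abs_le (abs_real_inner_le_norm g (x - y))
  nlinarith [norm_nonneg (x - y)]

end Gradient

section Projection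

variable {F : Type*} [NormedAddCommGroup F] [InnerProductSpace ℝ F] {K : Set F} {u v : F}

theorem inner_sub_le_zero_of_forall_dist_le (hK : Convex ℝ K) (hv : v ∈ K)
    (hmin : ∀ w ∈ K, dist u v ≤ dist u w) : ∀ w ∈ K, ⟪u - v, w - v⟫ ≤ 0 := by
  have : Nonempty K := ⟨⟨v, hv⟩⟩
  refine (norm_eq_iInf_iff_real_inner_le_zero hK hv).1 (le_antisymm ?_ ?_)
  · exact le_ciInf fun w => by simpa [dist_eq_norm] using hmin w w.2
  · exact ciInf_le ⟨0, by rintro _ ⟨w, rfl⟩; positivity⟩ (⟨v, hv⟩ : K)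

theorem norm_sub_le_of_forall_dist_le (hK : Convex ℝ K) {u' v' : F} (hv : v ∈ K) (hv' : v' ∈ K)
    (hmin : ∀ w ∈ K, dist u v ≤ dist u w) (hmin' : ∀ w ∈ K, dist u' v' ≤ dist u' w) :
    ‖v - v'‖ ≤ ‖u - u'‖ := by
  have h := inner_sub_le_zero_of_forall_dist_le hK hv hmin v' hv'
  have h' := inner_sub_le_zero_of_forall_dist_le hK hv' hmin' v hv
  -- Adding the two variational inequalities gives `‖v - v'‖² ≤ ⟪u - u', v - v'⟫`.
  have hsq : ‖v - v'‖ ^ 2 ≤ ‖u - u'‖ * ‖v - v'‖ := by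
    have hexpand :
        ⟪u - u', v - v'⟫ = ⟪u - v, v - v'⟫ - ⟪u' - v', v - v'⟫ + ⟪v - v', v - v'⟫ := by
      rw [show u - u' = (u - v) - (u' - v') + (v - v') by abel, inner_add_left, inner_sub_left]
    rw [show v' - v = -(v - v') by abel, inner_neg_right] at h
    calc ‖v - v'‖ ^ 2 = ⟪v - v', v - v'⟫ := (real_inner_self_eq_norm_sq _).symm
      _ ≤ ⟪u - u', v - v'⟫ := by linarith
      _ ≤ ‖u - u'‖ * ‖v - v'‖ := real_inner_le_norm _ _
  nlinarith [norm_nonneg (v - v'), norm_nonneg (u - u')]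

end Projection

section Average

variable {ι E : Type*} [Fintype ι] [Nonempty ι] [SeminormedAddCommGroup E] [NormedSpace ℝ E]

theorem norm_sub_average_le (z : ι → E) (i : ι) :
    ‖z i - (Fintype.card ι : ℝ)⁻¹ • ∑ j, z j‖ ≤ (Fintype.card ι : ℝ)⁻¹ * ∑ j, ‖z i - z j‖ := by
  have hn : (Fintype.card ι : ℝ) ≠ 0 := by positivity
  have heq : z i - (Fintype.card ι : ℝ)⁻¹ • ∑ j, z j
      = (Fintype.card ι : ℝ)⁻¹ • ∑ j, (z i - z j) := by
    rw [Finset.sum_sub_distrib, Finset.sum_const, Finset.card_univ, smul_sub,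
      ← Nat.cast_smul_eq_nsmul ℝ, inv_smul_smul₀ hn]
  rw [heq, norm_smul, Real.norm_of_nonneg (by positivity)]
  gcongr
  exact norm_sum_le _ _

theorem sum_norm_sub_average_le_two_mul {z v : ι → E} (h : ∀ i j, ‖z i - z j‖ ≤ ‖v i - v j‖) :
    ∑ i, ‖z i - (Fintype.card ι : ℝ)⁻¹ • ∑ j, z j‖
      ≤ 2 * ∑ i, ‖v i - (Fintype.card ι : ℝ)⁻¹ • ∑ j, v j‖ := by
  set n : ℝ := (Fintype.card ι : ℝ)
  set vb := n⁻¹ • ∑ j, v j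
  have hn : n ≠ 0 := by positivity
  calc ∑ i, ‖z i - n⁻¹ • ∑ j, z j‖ ≤ ∑ i, n⁻¹ * ∑ j, ‖z i - z j‖ :=
        Finset.sum_le_sum fun i _ => norm_sub_average_le z i
    _ ≤ ∑ i, n⁻¹ * ∑ j, (‖v i - vb‖ + ‖v j - vb‖) := by
        gcongr with i _ j _
        calc ‖z i - z j‖ ≤ ‖v i - v j‖ := h i j
          _ = ‖(v i - vb) - (v j - vb)‖ := by rw [sub_sub_sub_cancel_right]
          _ ≤ ‖v i - vb‖ + ‖v j - vb‖ := norm_sub_le _ _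
    _ = 2 * ∑ i, ‖v i - vb‖ := by
        simp only [Finset.sum_add_distrib, Finset.sum_const, Finset.card_univ, nsmul_eq_mul,
          ← Finset.mul_sum]
        field_simp
        ring

end Average

theorem sum_f_proj_lower_bound_general
    {d m : ℕ} (hm : 0 < m)
    (X : Set (EuclideanSpace ℝ (Fin d)))
    (hX_convex : Convex ℝ X)
    (f : Fin m → EuclideanSpace ℝ (Fin d) → ℝ)
    (g : Fin m → EuclideanSpace ℝ (Fin d) → EuclideanSpace ℝ (Fin d))
    (hf_convex : ∀ i, ConvexOn ℝ Set.univ (f i))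
    (hf_grad : ∀ i w, HasGradientAt (f i) (g i w) w)
    (Gf : ℝ) (hGf : ∀ i, ∀ w ∈ X, ‖g i w‖ ≤ Gf)
    (v z : Fin m → EuclideanSpace ℝ (Fin d))
    -- `z i = Π_X[v i]`, characterized as the closest point of `X`
    (hz_mem : ∀ i, z i ∈ X)
    (hz_proj : ∀ i, ∀ w ∈ X, dist (v i) (z i) ≤ dist (v i) w) :
    ∀ xc ∈ X,
      -2 * Gf * ∑ i, ‖v i - (m : ℝ)⁻¹ • ∑ ℓ, v ℓ‖
        + ((∑ i, f i ((m : ℝ)⁻¹ • ∑ ℓ, z ℓ)) - ∑ i, f i xc) ≤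
      ∑ i, (f i (z i) - f i xc) := by
  intro xc _
  have : Nonempty (Fin m) := ⟨⟨0, hm⟩⟩
  have hzb : (m : ℝ)⁻¹ • ∑ ℓ, z ℓ ∈ X := by
    rw [Finset.smul_sum]
    refine hX_convex.sum_mem (fun _ _ => by positivity) ?_ fun i _ => hz_mem i
    simp [hm.ne']
  set zb := (m : ℝ)⁻¹ • ∑ ℓ, z ℓ
  have hGf0 : 0 ≤ Gf := (norm_nonneg _).trans (hGf ⟨0, hm⟩ zb hzb)
  have hspread : ∑ i, ‖z i - zb‖ ≤ 2 * ∑ i, ‖v i - (m : ℝ)⁻¹ • ∑ ℓ, v ℓ‖ := by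
    simpa using sum_norm_sub_average_le_two_mul fun i j =>
      norm_sub_le_of_forall_dist_le hX_convex (hz_mem i) (hz_mem j) (hz_proj i) (hz_proj j)
  have hdrop : -(Gf * ∑ i, ‖z i - zb‖) ≤ ∑ i, (f i (z i) - f i zb) := by
    rw [Finset.mul_sum, ← Finset.sum_neg_distrib]
    exact Finset.sum_le_sum fun i _ =>
      (hf_convex i).neg_mul_norm_sub_le_sub_of_hasGradientAt (hf_grad i zb) (hGf i zb hzb) (z i)
  have hsplit : ∑ i, (f i (z i) - f i xc)
      = ∑ i, (f i (z i) - f i zb) + (∑ i, f i zb - ∑ i, f i xc) := by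
    simp only [Finset.sum_sub_distrib]; ring
  have := mul_le_mul_of_nonneg_left hspread hGf0
  linarith

/-- Let `X ⊆ ℝ^d` be nonempty closed convex, `f_i` convex differentiable with
`‖∇f_i‖ ≤ G_f` on `X`, `f = ∑ f_i`, `z_i = Π_X[v_i]`, `z̄ = (1/m)∑ z_ℓ`,
`v̄ = (1/m)∑ v_ℓ`. Then for every `x̌ ∈ X`:
`∑_i (f_i(z_i) − f_i(x̌)) ≥ −2G_f ∑_i ‖v_i − v̄‖ + (f(z̄) − f(x̌))`. -/
theorem sum_f_proj_lower_bound
    {d m : ℕ} (hm : 0 < m)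
    (X : Set (EuclideanSpace ℝ (Fin d)))
    (hX_ne : X.Nonempty) (hX_closed : IsClosed X) (hX_convex : Convex ℝ X)
    (f : Fin m → EuclideanSpace ℝ (Fin d) → ℝ)
    (g : Fin m → EuclideanSpace ℝ (Fin d) → EuclideanSpace ℝ (Fin d))
    (hf_convex : ∀ i, ConvexOn ℝ Set.univ (f i))
    (hf_grad : ∀ i w, HasGradientAt (f i) (g i w) w)
    (Gf : ℝ) (hGf : ∀ i, ∀ w ∈ X, ‖g i w‖ ≤ Gf)
    (v z : Fin m → EuclideanSpace ℝ (Fin d))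
    -- `z i = Π_X[v i]`, characterized as the closest point of `X`
    (hz_mem : ∀ i, z i ∈ X)
    (hz_proj : ∀ i, ∀ w ∈ X, dist (v i) (z i) ≤ dist (v i) w) :
    ∀ xc ∈ X,
      -2 * Gf * ∑ i, ‖v i - (m : ℝ)⁻¹ • ∑ ℓ, v ℓ‖
        + ((∑ i, f i ((m : ℝ)⁻¹ • ∑ ℓ, z ℓ)) - ∑ i, f i xc) ≤
      ∑ i, (f i (z i) - f i xc) :=
  sum_f_proj_lower_bound_general hm X hX_convex f g hf_convex hf_grad Gf hGf v z hz_mem hz_proj
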